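/- Suppose A, B > 0 are constants such that A·dCE(D) ≤ smCE(D) ≤ B·dCE(D) for all distributions D on [0,1]×{0,1}. Then B/A ≥ 3/2. -/

import Mathlib

open MeasureTheory

noncomputable section

/-- The real value of a boolean outcome. -/
def yval (b : Bool) : ℝ := if b then 1 else 0

/-- `Π` is an extension of the prediction-outcome distribution `D`: it is a probability
distribution of triples `(u, v, y)` whose `(v, y)`-marginal is `D`, with `u ∈ [0,1]`,
and `(u, y)` perfectly calibrated, i.e. `E[y | u] = u` (equivalently,
`E[(y - u) 1_{u ∈ S}] = 0` for every measurable `S`). -/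
def IsExtension (D : Measure (ℝ × Bool)) (π : Measure (ℝ × (ℝ × Bool))) : Prop :=
  IsProbabilityMeasure π ∧
  π.map Prod.snd = D ∧
  (∀ᵐ p ∂π, p.1 ∈ Set.Icc (0 : ℝ) 1) ∧
  ∀ S : Set ℝ, MeasurableSet S →
    (∫ p in {p : ℝ × (ℝ × Bool) | p.1 ∈ S}, yval p.2.2 ∂π) =
      ∫ p in {p : ℝ × (ℝ × Bool) | p.1 ∈ S}, p.1 ∂π

/-- The lower distance to calibration of a distribution `D` on `[0,1] × {0,1}`. -/
def dCE (D : Measure (ℝ × Bool)) : ℝ :=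
  sInf {r : ℝ | ∃ π : Measure (ℝ × (ℝ × Bool)), IsExtension D π ∧
    r = ∫ p, |p.1 - p.2.1| ∂π}

/-- The smooth calibration error of a distribution `D` on `[0,1] × {0,1}`:
the supremum over `1`-Lipschitz weight functions `w : [0,1] → [-1,1]` of
`|E[(y - v) w(v)]|`. -/
def smCE (D : Measure (ℝ × Bool)) : ℝ :=
  sSup {r : ℝ | ∃ w : ℝ → ℝ, LipschitzWith 1 w ∧ (∀ t : ℝ, w t ∈ Set.Icc (-1 : ℝ) 1) ∧
    r = |∫ p, (yval p.2 - p.1) * w p.1 ∂D|}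

/-!
Both bounds come from two-point distributions. If the prediction is always `1/2` while
`y ~ Bern(3/4)`, every weight sees only the bias `1/4`, so `smCE ≤ 1/4`; but a calibrated
`u` must have `E[u] = E[y] = 3/4`, so `dCE ≥ 1/4`. Hence `A ≤ 1`. If instead `(v, y)` is
`(1/4, 1)` or `(1/2, 0)` with equal probability, the constant calibrated predictor `u = 1/2`
shows `dCE ≤ 1/8`, while the tent weight peaking at `1/4` gives `smCE ≥ 3/16`. Hence `B ≥ 3/2`.
-/

open Set

lemma measurable_yval : Measurable yval := measurable_from_top

lemma yval_mem_Icc (b : Bool) : yval b ∈ Icc (0 : ℝ) 1 := by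
  cases b <;> simp [yval]

lemma integrable_of_ae_mem_Icc {α : Type*} [MeasurableSpace α] {μ : Measure α}
    [IsFiniteMeasure μ] {f : α → ℝ} (hf : AEStronglyMeasurable f μ)
    (h : ∀ᵐ x ∂μ, f x ∈ Icc (0 : ℝ) 1) : Integrable f μ :=
  Integrable.of_bound hf 1 <| h.mono fun _ hx => abs_le.2 ⟨by linarith [hx.1], hx.2⟩

section TwoPoint

variable {α : Type*} [MeasurableSpace α]

def twoPointMeasure (t : ℝ) (x y : α) : Measure α :=
  ENNReal.ofReal t • Measure.dirac x + ENNReal.ofReal (1 - t) • Measure.dirac y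

lemma isProbabilityMeasure_twoPointMeasure {t : ℝ} (ht : t ∈ Icc (0 : ℝ) 1) (x y : α) :
    IsProbabilityMeasure (twoPointMeasure t x y) := by
  constructor
  simp [twoPointMeasure, ← ENNReal.ofReal_add ht.1 (sub_nonneg.2 ht.2)]

lemma integral_twoPointMeasure [MeasurableSingletonClass α] {t : ℝ} (ht : t ∈ Icc (0 : ℝ) 1)
    (x y : α) (f : α → ℝ) :
    ∫ z, f z ∂twoPointMeasure t x y = t * f x + (1 - t) * f y := by
  rw [twoPointMeasure, integral_add_measure ((integrable_dirac (by simp)).smul_measure (by simp))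
    ((integrable_dirac (by simp)).smul_measure (by simp)), integral_smul_measure,
    integral_smul_measure, integral_dirac, integral_dirac,
    ENNReal.toReal_ofReal ht.1, ENNReal.toReal_ofReal (sub_nonneg.2 ht.2), smul_eq_mul, smul_eq_mul]

lemma ae_twoPointMeasure {p : α → Prop} (hp : MeasurableSet {z | p z}) {x y : α} (hx : p x)
    (hy : p y) (t : ℝ) : ∀ᵐ z ∂twoPointMeasure t x y, p z :=
  ae_add_measure_iff.2 ⟨Measure.ae_smul_measure ((ae_dirac_iff hp).2 hx) _,
    Measure.ae_smul_measure ((ae_dirac_iff hp).2 hy) _⟩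

end TwoPoint

section SmoothCalibrationError

variable {D : Measure (ℝ × Bool)}

lemma abs_integral_mul_weight_le_one [IsProbabilityMeasure D]
    (hD : ∀ᵐ q ∂D, q.1 ∈ Icc (0 : ℝ) 1) {w : ℝ → ℝ} (hw : ∀ t, w t ∈ Icc (-1 : ℝ) 1) :
    |∫ q, (yval q.2 - q.1) * w q.1 ∂D| ≤ 1 := by
  have hbound : ∀ᵐ q ∂D, ‖(yval q.2 - q.1) * w q.1‖ ≤ 1 := by
    filter_upwards [hD] with q hq
    have hy := yval_mem_Icc q.2
    rw [Real.norm_eq_abs, abs_mul]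
    exact mul_le_one₀ (abs_le.2 ⟨by linarith [hy.1, hq.2], by linarith [hy.2, hq.1]⟩)
      (abs_nonneg _) (abs_le.2 (hw q.1))
  simpa using norm_integral_le_of_norm_le_const hbound

lemma le_smCE [IsProbabilityMeasure D] (hD : ∀ᵐ q ∂D, q.1 ∈ Icc (0 : ℝ) 1) {w : ℝ → ℝ}
    (hlip : LipschitzWith 1 w) (hw : ∀ t, w t ∈ Icc (-1 : ℝ) 1) :
    |∫ q, (yval q.2 - q.1) * w q.1 ∂D| ≤ smCE D :=
  le_csSup ⟨1, by rintro r ⟨w, -, hw, rfl⟩; exact abs_integral_mul_weight_le_one hD hw⟩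
    ⟨w, hlip, hw, rfl⟩

lemma smCE_le {c : ℝ} (hc : 0 ≤ c)
    (h : ∀ w : ℝ → ℝ, (∀ t, w t ∈ Icc (-1 : ℝ) 1) → |∫ q, (yval q.2 - q.1) * w q.1 ∂D| ≤ c) :
    smCE D ≤ c :=
  Real.sSup_le (by rintro r ⟨w, -, hw, rfl⟩; exact h w hw) hc

end SmoothCalibrationError

section DistanceToCalibration

variable {D : Measure (ℝ × Bool)}

lemma dCE_le {π : Measure (ℝ × (ℝ × Bool))} (hπ : IsExtension D π) :
    dCE D ≤ ∫ p, |p.1 - p.2.1| ∂π :=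
  csInf_le ⟨0, by rintro r ⟨π, -, rfl⟩; exact integral_nonneg fun _ => abs_nonneg _⟩ ⟨π, hπ, rfl⟩

lemma integral_yval_mem_Icc (D : Measure (ℝ × Bool)) [IsProbabilityMeasure D] :
    ∫ q, yval q.2 ∂D ∈ Icc (0 : ℝ) 1 := by
  have hint : Integrable (fun q : ℝ × Bool => yval q.2) D :=
    integrable_of_ae_mem_Icc (measurable_yval.comp measurable_snd).aestronglyMeasurable
      (ae_of_all _ fun q => yval_mem_Icc q.2)
  refine ⟨integral_nonneg fun q => (yval_mem_Icc q.2).1, ?_⟩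
  calc ∫ q, yval q.2 ∂D ≤ ∫ _, (1 : ℝ) ∂D :=
        integral_mono hint (integrable_const 1) fun q => (yval_mem_Icc q.2).2
    _ = 1 := by simp

lemma isExtension_map_const (D : Measure (ℝ × Bool)) [IsProbabilityMeasure D] :
    IsExtension D (D.map fun q => (∫ q', yval q'.2 ∂D, q)) := by
  set c := ∫ q', yval q'.2 ∂D
  have hφ : Measurable fun q : ℝ × Bool => (c, q) := measurable_const.prodMk measurable_id
  refine ⟨Measure.isProbabilityMeasure_map hφ.aemeasurable, ?_, ?_, fun S hS => ?_⟩
  · rw [Measure.map_map measurable_snd hφ]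
    exact Measure.map_id
  · rw [ae_map_iff hφ.aemeasurable (measurable_fst measurableSet_Icc)]
    exact ae_of_all _ fun _ => integral_yval_mem_Icc D
  · have hS' : MeasurableSet {p : ℝ × (ℝ × Bool) | p.1 ∈ S} := measurable_fst hS
    have hy : Measurable fun p : ℝ × (ℝ × Bool) => yval p.2.2 :=
      measurable_yval.comp (measurable_snd.comp measurable_snd)
    rw [setIntegral_map hS' hy.aestronglyMeasurable hφ.aemeasurable,
      setIntegral_map hS' measurable_fst.aestronglyMeasurable hφ.aemeasurable]
    by_cases hcS : c ∈ S
    · simp [hcS, c]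
    · simp [hcS]

-- Calibration over `S = univ` gives `E[u] = E[y]`, so the transport cost is at least the bias.
lemma abs_integral_sub_le_of_isExtension (hD : ∀ᵐ q ∂D, q.1 ∈ Icc (0 : ℝ) 1)
    {π : Measure (ℝ × (ℝ × Bool))} (hπ : IsExtension D π) :
    |∫ q, yval q.2 ∂D - ∫ q, q.1 ∂D| ≤ ∫ p, |p.1 - p.2.1| ∂π := by
  obtain ⟨hprob, rfl, hu, hcal⟩ := hπ
  have hv : ∀ᵐ p ∂π, p.2.1 ∈ Icc (0 : ℝ) 1 := ae_of_ae_map measurable_snd.aemeasurable hD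
  have hEu : ∫ p, yval p.2.2 ∂π = ∫ p, p.1 ∂π := by
    simpa using hcal univ MeasurableSet.univ
  have hy : Measurable fun q : ℝ × Bool => yval q.2 := measurable_yval.comp measurable_snd
  rw [integral_map measurable_snd.aemeasurable hy.aestronglyMeasurable,
    integral_map measurable_snd.aemeasurable measurable_fst.aestronglyMeasurable, hEu,
    ← integral_sub (integrable_of_ae_mem_Icc measurable_fst.aestronglyMeasurable hu)
      (integrable_of_ae_mem_Icc measurable_snd.fst.aestronglyMeasurable hv)]
  exact abs_integral_le_integral_abs

lemma abs_integral_sub_le_dCE [IsProbabilityMeasure D] (hD : ∀ᵐ q ∂D, q.1 ∈ Icc (0 : ℝ) 1) :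
    |∫ q, yval q.2 ∂D - ∫ q, q.1 ∂D| ≤ dCE D :=
  le_csInf ⟨_, _, isExtension_map_const D, rfl⟩ fun _ ⟨_, hπ, hr⟩ =>
    hr ▸ abs_integral_sub_le_of_isExtension hD hπ

lemma dCE_le_integral_abs_sub_mean [IsProbabilityMeasure D] :
    dCE D ≤ ∫ q, |∫ q', yval q'.2 ∂D - q.1| ∂D := by
  refine (dCE_le (isExtension_map_const D)).trans_eq ?_
  exact integral_map (measurable_const.prodMk measurable_id).aemeasurable
    (measurable_fst.sub measurable_snd.fst).abs.aestronglyMeasurable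

end DistanceToCalibration

def biasedCoinDist : Measure (ℝ × Bool) :=
  twoPointMeasure (3 / 4) ((1 / 2 : ℝ), true) ((1 / 2 : ℝ), false)

def twoPredictionDist : Measure (ℝ × Bool) :=
  twoPointMeasure (1 / 2) ((1 / 4 : ℝ), true) ((1 / 2 : ℝ), false)

instance : IsProbabilityMeasure biasedCoinDist :=
  isProbabilityMeasure_twoPointMeasure (by norm_num) _ _

instance : IsProbabilityMeasure twoPredictionDist :=
  isProbabilityMeasure_twoPointMeasure (by norm_num) _ _

lemma ae_mem_Icc_biasedCoinDist : ∀ᵐ q ∂biasedCoinDist, q.1 ∈ Icc (0 : ℝ) 1 :=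
  ae_twoPointMeasure (measurable_fst measurableSet_Icc) (by norm_num) (by norm_num) _

lemma ae_mem_Icc_twoPredictionDist : ∀ᵐ q ∂twoPredictionDist, q.1 ∈ Icc (0 : ℝ) 1 :=
  ae_twoPointMeasure (measurable_fst measurableSet_Icc) (by norm_num) (by norm_num) _

lemma integral_biasedCoinDist (f : ℝ × Bool → ℝ) :
    ∫ q, f q ∂biasedCoinDist = 3 / 4 * f ((1 / 2 : ℝ), true) + 1 / 4 * f ((1 / 2 : ℝ), false) := by
  rw [biasedCoinDist, integral_twoPointMeasure (by norm_num)]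
  norm_num

lemma integral_twoPredictionDist (f : ℝ × Bool → ℝ) :
    ∫ q, f q ∂twoPredictionDist = 1 / 2 * f ((1 / 4 : ℝ), true) + 1 / 2 * f ((1 / 2 : ℝ), false) := by
  rw [twoPredictionDist, integral_twoPointMeasure (by norm_num)]
  norm_num

lemma smCE_biasedCoinDist_le : smCE biasedCoinDist ≤ 1 / 4 := by
  refine smCE_le (by norm_num) fun w hw => ?_
  rw [integral_biasedCoinDist]
  norm_num [yval]
  exact abs_le.2 ⟨by linarith [(hw (1 / 2)).1], by linarith [(hw (1 / 2)).2]⟩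

lemma le_dCE_biasedCoinDist : 1 / 4 ≤ dCE biasedCoinDist := by
  refine le_trans (le_of_eq ?_) (abs_integral_sub_le_dCE ae_mem_Icc_biasedCoinDist)
  rw [integral_biasedCoinDist, integral_biasedCoinDist]
  norm_num [yval]

lemma dCE_twoPredictionDist_le : dCE twoPredictionDist ≤ 1 / 8 := by
  refine dCE_le_integral_abs_sub_mean.trans (le_of_eq ?_)
  rw [integral_twoPredictionDist, integral_twoPredictionDist]
  norm_num [yval]

def quarterTent : ℝ → ℝ := fun t => max (1 - |t - 1 / 4|) (-1)

lemma lipschitzWith_quarterTent : LipschitzWith 1 quarterTent := by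
  refine LipschitzWith.of_dist_le_mul fun x y => ?_
  simp only [Real.dist_eq, quarterTent, NNReal.coe_one, one_mul]
  calc |max (1 - |x - 1 / 4|) (-1) - max (1 - |y - 1 / 4|) (-1)|
      ≤ |(1 - |x - 1 / 4|) - (1 - |y - 1 / 4|)| := abs_max_sub_max_le_abs _ _ _
    _ = |(|y - 1 / 4|) - (|x - 1 / 4|)| := by ring_nf
    _ ≤ |(y - 1 / 4) - (x - 1 / 4)| := abs_abs_sub_abs_le_abs_sub _ _
    _ = |x - y| := by rw [abs_sub_comm]; ring_nf

lemma quarterTent_mem_Icc (t : ℝ) : quarterTent t ∈ Icc (-1 : ℝ) 1 :=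
  ⟨le_max_right _ _, max_le (by linarith [abs_nonneg (t - 1 / 4)]) (by norm_num)⟩

lemma le_smCE_twoPredictionDist : 3 / 16 ≤ smCE twoPredictionDist := by
  refine le_trans (le_of_eq ?_)
    (le_smCE ae_mem_Icc_twoPredictionDist lipschitzWith_quarterTent quarterTent_mem_Icc)
  rw [integral_twoPredictionDist]
  norm_num [yval, quarterTent]

theorem stmt3 (A B : ℝ) (hA : 0 < A) (hB : 0 < B)
    (h : ∀ D : Measure (ℝ × Bool), IsProbabilityMeasure D →
      (∀ᵐ p ∂D, p.1 ∈ Set.Icc (0 : ℝ) 1) →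
      A * dCE D ≤ smCE D ∧ smCE D ≤ B * dCE D) :
    (3 : ℝ) / 2 ≤ B / A := by
  have hA_le : A ≤ 1 := by
    have hcoin := (h biasedCoinDist inferInstance ae_mem_Icc_biasedCoinDist).1
    have := mul_le_mul_of_nonneg_left le_dCE_biasedCoinDist hA.le
    linarith [smCE_biasedCoinDist_le]
  have hB_ge : 3 / 2 ≤ B := by
    have htwo := (h twoPredictionDist inferInstance ae_mem_Icc_twoPredictionDist).2
    have := mul_le_mul_of_nonneg_left dCE_twoPredictionDist_le hB.le
    linarith [le_smCE_twoPredictionDist]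
  rw [le_div_iff₀ hA]
  linarith

end
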